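/- Let ρ_AB be the 2×4 state (1/8)𝟙⊗𝟙 + (1/4)(t₁ σ₁⊗λ₁ + t₂ σ₂⊗λ₁₃ + t₃ σ₃⊗λ₃), with σ Pauli matrices and λ SU(4) generators. Then ρ_AB is positive semidefinite if and only if t₂² ≤ 1/4 and (|t₁| + |t₃|)² ≤ 1/4. -/

import Mathlib

/-!
In the basis `e_{(i,k)}` the state only couples `(0, k)` with `(1, k')`, where `k ↦ k'` swaps
`0 ↔ 1` and `2 ↔ 3`, and every such entry is real. Hence `ρ` is a sum of four real symmetric
`2 × 2` blocks `[[a, b], [b, a]]`, with eigenvectors `e_{(0,k)} ± e_{(1,k')}` and eigenvalues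
`1/8 + t₃/4 ± t₁/4`, `1/8 - t₃/4 ± t₁/4` and (twice) `1/8 ± t₂/4`. A matrix written as a
combination of pairwise orthogonal rank-one projections is positive semidefinite exactly when
all coefficients are nonnegative, and these eight inequalities say `|t₂| ≤ 1/2` and
`|t₁ ± t₃| ≤ 1/2`, i.e. `|t₁| + |t₃| ≤ 1/2`.
-/

open Matrix ComplexOrder Kronecker

noncomputable def pauli1 : Matrix (Fin 2) (Fin 2) ℂ := !![0, 1; 1, 0]
noncomputable def pauli2 : Matrix (Fin 2) (Fin 2) ℂ := !![0, -Complex.I; Complex.I, 0]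
noncomputable def pauli3 : Matrix (Fin 2) (Fin 2) ℂ := !![1, 0; 0, -1]

noncomputable def lam1 : Matrix (Fin 4) (Fin 4) ℂ :=
  !![0, 1, 0, 0; 1, 0, 0, 0; 0, 0, 0, 0; 0, 0, 0, 0]
noncomputable def lam3 : Matrix (Fin 4) (Fin 4) ℂ :=
  !![1, 0, 0, 0; 0, -1, 0, 0; 0, 0, 0, 0; 0, 0, 0, 0]
noncomputable def lam13 : Matrix (Fin 4) (Fin 4) ℂ :=
  !![0, 0, 0, 0; 0, 0, 0, 0; 0, 0, 0, -Complex.I; 0, 0, Complex.I, 0]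

theorem Matrix.posSemidef_sum_smul_vecMulVec_iff {ι n 𝕜 : Type*} [Fintype ι] [Fintype n]
    [RCLike 𝕜] (c : ι → ℝ) {v : ι → n → 𝕜} (hv : ∀ i, v i ≠ 0)
    (horth : Pairwise fun i j => star (v i) ⬝ᵥ v j = 0) :
    (∑ i, c i • vecMulVec (v i) (star (v i))).PosSemidef ↔ ∀ i, 0 ≤ c i := by
  refine ⟨fun hM k => ?_, fun hc => posSemidef_sum _ fun i _ =>
    (posSemidef_vecMulVec_self_star (v i)).smul (hc i)⟩
  have hnorm : 0 < star (v k) ⬝ᵥ v k := dotProduct_star_self_pos_iff.mpr (hv k)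
  have hquad : star (v k) ⬝ᵥ (∑ i, c i • vecMulVec (v i) (star (v i))) *ᵥ v k
      = c k • (star (v k) ⬝ᵥ v k) ^ 2 := by
    simp only [sum_mulVec, smul_mulVec, vecMulVec_mulVec, dotProduct_sum, dotProduct_smul]
    rw [Finset.sum_eq_single k (fun i _ hik => by simp [horth hik.symm]) (by simp)]
    simp [sq]
  have hnonneg := hM.dotProduct_mulVec_nonneg (v k)
  rw [hquad] at hnonneg
  exact nonneg_of_smul_nonneg_of_pos_right hnonneg (pow_pos hnorm 2)

noncomputable def twoByFourState (t₁ t₂ t₃ : ℝ) : Matrix (Fin 2 × Fin 4) (Fin 2 × Fin 4) ℂ :=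
  (1/8 : ℂ) • 1 + (1/4 : ℂ) • ((t₁ : ℂ) • (pauli1 ⊗ₖ lam1) + (t₂ : ℂ) • (pauli2 ⊗ₖ lam13) +
    (t₃ : ℂ) • (pauli3 ⊗ₖ lam3))

namespace twoByFourState

def partner : Fin 4 → Fin 4 := ![1, 0, 3, 2]

noncomputable def eigenvector (p : Fin 4 × Fin 2) : Fin 2 × Fin 4 → ℂ :=
  Pi.single (0, p.1) 1 + ![1, -1] p.2 • Pi.single (1, partner p.1) 1

/-- Half the eigenvalue of `eigenvector p`, because `‖eigenvector p‖² = 2`. -/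
noncomputable def weight (t₁ t₂ t₃ : ℝ) (p : Fin 4 × Fin 2) : ℝ :=
  ![![1 + 2 * t₃ + 2 * t₁, 1 + 2 * t₃ - 2 * t₁], ![1 - 2 * t₃ + 2 * t₁, 1 - 2 * t₃ - 2 * t₁],
    ![1 - 2 * t₂, 1 + 2 * t₂], ![1 + 2 * t₂, 1 - 2 * t₂]] p.1 p.2 / 16

lemma eigenvector_apply (k : Fin 4) (s : Fin 2) (i : Fin 2) (l : Fin 4) :
    eigenvector (k, s) (i, l) =
      if i = 0 then (if l = k then 1 else 0) else (if l = partner k then ![1, -1] s else 0) := by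
  fin_cases i <;> fin_cases s <;> simp [eigenvector, Pi.single_apply, apply_ite]

lemma eigenvector_ne_zero (p : Fin 4 × Fin 2) : eigenvector p ≠ 0 := by
  obtain ⟨k, s⟩ := p
  intro h
  simpa [eigenvector_apply] using congrFun h (0, k)

lemma eigenvector_orthogonal :
    Pairwise fun p q => star (eigenvector p) ⬝ᵥ eigenvector q = 0 := by
  rintro ⟨k, s⟩ ⟨k', s'⟩ hne
  simp only [dotProduct, Pi.star_apply, Fintype.sum_prod_type, Fin.sum_univ_four,
    Fin.sum_univ_two, eigenvector_apply]
  fin_cases k <;> fin_cases s <;> fin_cases k' <;> fin_cases s' <;> simp [partner] at hne ⊢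

theorem eq_sum_weight_smul_vecMulVec (t₁ t₂ t₃ : ℝ) :
    twoByFourState t₁ t₂ t₃ =
      ∑ p, weight t₁ t₂ t₃ p • vecMulVec (eigenvector p) (star (eigenvector p)) := by
  ext ⟨i, k⟩ ⟨j, l⟩
  simp only [twoByFourState, Matrix.add_apply, Matrix.smul_apply, kroneckerMap_apply, one_apply,
    Matrix.sum_apply, vecMulVec_apply, Pi.star_apply, Fintype.sum_prod_type, Fin.sum_univ_four,
    Fin.sum_univ_two, eigenvector_apply]
  fin_cases i <;> fin_cases j <;> fin_cases k <;> fin_cases l <;>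
    simp [weight, partner, pauli1, pauli2, pauli3, lam1, lam3, lam13] <;> ring

theorem weight_nonneg_iff (t₁ t₂ t₃ : ℝ) :
    (∀ p, 0 ≤ weight t₁ t₂ t₃ p) ↔ t₂ ^ 2 ≤ 1 / 4 ∧ (|t₁| + |t₃|) ^ 2 ≤ 1 / 4 := by
  have hquarter : (1 / 4 : ℝ) = (1 / 2) ^ 2 := by norm_num
  rw [hquarter, sq_le_sq, sq_le_sq₀ (by positivity) (by norm_num),
    abs_of_pos (by norm_num : (0 : ℝ) < 1 / 2), abs_le]
  simp only [Prod.forall, Fin.forall_fin_succ, IsEmpty.forall_iff, and_true, weight, cons_val_zero,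
    cons_val_succ]
  rcases abs_cases t₁ with ⟨h₁, _⟩ | ⟨h₁, _⟩ <;> rcases abs_cases t₃ with ⟨h₃, _⟩ | ⟨h₃, _⟩ <;>
    rw [h₁, h₃] <;> grind

end twoByFourState

theorem two_by_four_state_psd_iff (t₁ t₂ t₃ : ℝ) :
    ((1/8 : ℂ) • (1 : Matrix (Fin 2 × Fin 4) (Fin 2 × Fin 4) ℂ) +
      (1/4 : ℂ) • ((t₁ : ℂ) • (pauli1 ⊗ₖ lam1) + (t₂ : ℂ) • (pauli2 ⊗ₖ lam13) +
        (t₃ : ℂ) • (pauli3 ⊗ₖ lam3))).PosSemidef ↔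
      t₂^2 ≤ 1/4 ∧ (|t₁| + |t₃|)^2 ≤ 1/4 := by
  change (twoByFourState t₁ t₂ t₃).PosSemidef ↔ _
  rw [twoByFourState.eq_sum_weight_smul_vecMulVec, posSemidef_sum_smul_vecMulVec_iff _
    twoByFourState.eigenvector_ne_zero twoByFourState.eigenvector_orthogonal]
  exact twoByFourState.weight_nonneg_iff t₁ t₂ t₃
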